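/- arXiv:1311.3690 — 3 statements merged into one kernel-verified Lean document; each statement's English description precedes it below -/
import Mathlib

section
/- Let p > 0 and let f : ℝⁿ → ℝ₊ be γ-concave for some γ ≥ -1/(p+1). Then the function F(x) = (∫₀^∞ f(rx) r^{p-1} dr)^{-1/p} is a gauge on ℝⁿ, i.e., F is positively homogeneous of degree 1 and convex. -/
open MeasureTheory Set Filter Metric
open scoped Topology ENNReal

set_option maxHeartbeats 1000000

namespace BallBobkov

lemma pi_sum (p A B σ τ : ℝ) (hp : 0 < p) (hA : 0 < A) (hB : 0 < B)
    (hσ : 0 ≤ σ) (hτ : 0 ≤ τ) :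
    (A ^ (-1/p) + B ^ (-1/p)) ^ (-p) * (σ + τ) ^ (p+1) ≤ A * σ ^ (p+1) + B * τ ^ (p+1) := by
  set D : ℝ := A ^ (-1/p) + B ^ (-1/p) with hDdef
  have hD : 0 < D := add_pos (Real.rpow_pos_of_pos hA _) (Real.rpow_pos_of_pos hB _)
  set lam : ℝ := A ^ (-1/p) / D with hlam
  set kap : ℝ := B ^ (-1/p) / D with hkap
  have hlam0 : 0 < lam := div_pos (Real.rpow_pos_of_pos hA _) hD
  have hkap0 : 0 < kap := div_pos (Real.rpow_pos_of_pos hB _) hD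
  have hlk : lam + kap = 1 := by
    rw [hlam, hkap, ← add_div, hDdef, div_self hD.ne']
  have hcx := (convexOn_rpow (by linarith : (1:ℝ) ≤ p+1)).2
    (Set.mem_Ici.2 (div_nonneg hσ hlam0.le) : σ / lam ∈ Set.Ici (0:ℝ))
    (Set.mem_Ici.2 (div_nonneg hτ hkap0.le)) hlam0.le hkap0.le hlk
  simp only [smul_eq_mul] at hcx
  have e1 : lam * (σ / lam) + kap * (τ / kap) = σ + τ := by
    field_simp
  rw [e1] at hcx
  have elam : lam ^ (-p) = A * D ^ p := by
    rw [hlam, Real.div_rpow (Real.rpow_nonneg hA.le _) hD.le, ← Real.rpow_mul hA.le]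
    have h : -1/p * -p = 1 := by field_simp
    rw [h, Real.rpow_one, Real.rpow_neg hD.le, div_inv_eq_mul]
  have ekap : kap ^ (-p) = B * D ^ p := by
    rw [hkap, Real.div_rpow (Real.rpow_nonneg hB.le _) hD.le, ← Real.rpow_mul hB.le]
    have h : -1/p * -p = 1 := by field_simp
    rw [h, Real.rpow_one, Real.rpow_neg hD.le, div_inv_eq_mul]
  have e2 : lam * (σ / lam) ^ (p+1) = A * D ^ p * σ ^ (p+1) := by
    rw [Real.div_rpow hσ hlam0.le]
    have h2 : lam * (σ ^ (p+1) / lam ^ (p+1)) = σ ^ (p+1) * (lam ^ (1:ℝ) / lam ^ (p+1)) := by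
      rw [Real.rpow_one]; ring
    rw [h2, ← Real.rpow_sub hlam0]
    have h1 : (1:ℝ) - (p+1) = -p := by ring
    rw [h1, elam]; ring
  have e3 : kap * (τ / kap) ^ (p+1) = B * D ^ p * τ ^ (p+1) := by
    rw [Real.div_rpow hτ hkap0.le]
    have h2 : kap * (τ ^ (p+1) / kap ^ (p+1)) = τ ^ (p+1) * (kap ^ (1:ℝ) / kap ^ (p+1)) := by
      rw [Real.rpow_one]; ring
    rw [h2, ← Real.rpow_sub hkap0]
    have h1 : (1:ℝ) - (p+1) = -p := by ring
    rw [h1, ekap]; ring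
  rw [e2, e3] at hcx
  have hDp' : D ^ (-p) = (D ^ p)⁻¹ := Real.rpow_neg hD.le p
  have hDpp : 0 < D ^ p := Real.rpow_pos_of_pos hD _
  rw [hDp', inv_mul_le_iff₀ hDpp]
  calc (σ + τ) ^ (p+1) ≤ A * D ^ p * σ ^ (p+1) + B * D ^ p * τ ^ (p+1) := hcx
    _ = D ^ p * (A * σ ^ (p+1) + B * τ ^ (p+1)) := by ring

lemma pi_ineq (p A B α β : ℝ) (hp : 0 < p) (hA : 0 < A) (hB : 0 < B)
    (hα : 0 < α) (hβ : 0 < β) :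
    (A ^ (-1/p) + B ^ (-1/p)) ^ (-p) ≤
      (A / α + B / β) * (α ^ (-(p+1)⁻¹) + β ^ (-(p+1)⁻¹)) ^ (-(p+1)) := by
  have hp1 : (0:ℝ) < p + 1 := by linarith
  set σ : ℝ := α ^ (-(p+1)⁻¹) with hσdef
  set τ : ℝ := β ^ (-(p+1)⁻¹) with hτdef
  have hσ : 0 < σ := Real.rpow_pos_of_pos hα _
  have hτ : 0 < τ := Real.rpow_pos_of_pos hβ _
  have hs1 : σ ^ (p+1) = α⁻¹ := by
    rw [hσdef, ← Real.rpow_mul hα.le]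
    have h : -(p+1)⁻¹ * (p+1) = -1 := by field_simp
    rw [h, Real.rpow_neg_one]
  have hs2 : τ ^ (p+1) = β⁻¹ := by
    rw [hτdef, ← Real.rpow_mul hβ.le]
    have h : -(p+1)⁻¹ * (p+1) = -1 := by field_simp
    rw [h, Real.rpow_neg_one]
  have hmain := pi_sum p A B σ τ hp hA hB hσ.le hτ.le
  rw [hs1, hs2] at hmain
  have hst : (0:ℝ) < (σ + τ) ^ (p+1) := Real.rpow_pos_of_pos (by linarith) _
  have hneg : (σ + τ) ^ (-(p+1)) = ((σ + τ) ^ (p+1))⁻¹ := Real.rpow_neg (by linarith) _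
  rw [hneg]
  have hdiv : A / α + B / β = A * α⁻¹ + B * β⁻¹ := by
    rw [div_eq_mul_inv, div_eq_mul_inv]
  rw [hdiv, mul_comm (A * α⁻¹ + B * β⁻¹) (((σ + τ) ^ (p+1))⁻¹), ← div_eq_inv_mul]
  rw [le_div_iff₀ hst]
  exact hmain

lemma quantile_side (U : ℝ → ℝ) (hU0 : ∀ a ∈ Ioi (0:ℝ), 0 ≤ U a)
    (hUi : IntegrableOn U (Ioi 0)) (hA : 0 < ∫ a in Ioi (0:ℝ), U a) :
    ∃ (u : ℝ → ℝ) (s : Set ℝ), MeasurableSet s ∧ s ⊆ Ioo 0 1 ∧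
      volume (Ioo 0 1 \ s) = 0 ∧ MonotoneOn u (Ioo 0 1) ∧
      (∀ t ∈ Ioo (0:ℝ) 1, 0 < u t) ∧
      (∀ t ∈ s, DifferentiableAt ℝ u t ∧ 0 < U (u t) ∧
        (∫ a in Ioi (0:ℝ), U a) ≤ deriv u t * U (u t)) := by
  classical
  set A : ℝ := ∫ a in Ioi (0:ℝ), U a with hAdef
  set Ubar : ℝ → ℝ := indicator (Ioi 0) U with hUbar
  have hUbari : Integrable Ubar := by
    rw [hUbar, integrable_indicator_iff measurableSet_Ioi]; exact hUi
  have hUbar0 : ∀ a, 0 ≤ Ubar a := by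
    intro a; rw [hUbar]
    by_cases h : a ∈ Ioi (0:ℝ)
    · rw [indicator_of_mem h]; exact hU0 a h
    · rw [indicator_of_notMem h]
  have hmk := hUbari.aestronglyMeasurable
  set U0 : ℝ → ℝ := fun a => max (hmk.mk Ubar a) 0 with hU0def
  have hU0m : Measurable U0 := (hmk.stronglyMeasurable_mk.measurable).max measurable_const
  have hU0eq : Ubar =ᵐ[volume] U0 := by
    filter_upwards [hmk.ae_eq_mk] with a ha
    rw [hU0def]
    simp only [← ha, max_eq_left (hUbar0 a)]
  have hU0nn : ∀ a, 0 ≤ U0 a := fun a => le_max_right _ _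
  have hU0i : Integrable U0 := hUbari.congr hU0eq
  -- the primitive
  set Φ : ℝ → ℝ := fun b => ∫ x in (0:ℝ)..b, U0 x with hΦdef
  have hII : ∀ a b : ℝ, IntervalIntegrable U0 volume a b := fun a b => hU0i.intervalIntegrable
  have hΦc : Continuous Φ := intervalIntegral.continuous_primitive hII 0
  have hΦ00 : Φ 0 = 0 := by rw [hΦdef]; simp
  have hΦmono : Monotone Φ := by
    intro b1 b2 h
    have h1 := intervalIntegral.integral_add_adjacent_intervals (hII 0 b1) (hII b1 b2)
    have h2 : 0 ≤ ∫ x in b1..b2, U0 x :=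
      intervalIntegral.integral_nonneg h (fun x _ => hU0nn x)
    rw [hΦdef]
    simp only []
    linarith [h1]
  have hIoiU0 : ∫ a in Ioi (0:ℝ), U0 a = A := by
    rw [hAdef]
    have h1 : ∫ a in Ioi (0:ℝ), U0 a = ∫ a in Ioi (0:ℝ), Ubar a :=
      integral_congr_ae (ae_restrict_of_ae hU0eq.symm)
    rw [h1, hUbar, setIntegral_indicator measurableSet_Ioi, inter_self]
  have hΦIoc : ∀ b1 b2 : ℝ, b1 ≤ b2 → Φ b2 - Φ b1 = ∫ x in Ioc b1 b2, U0 x := by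
    intro b1 b2 h
    have h1 := intervalIntegral.integral_add_adjacent_intervals (hII 0 b1) (hII b1 b2)
    have h2 : ∫ x in b1..b2, U0 x = ∫ x in Ioc b1 b2, U0 x :=
      intervalIntegral.integral_of_le h
    rw [hΦdef]
    simp only []
    linarith [h1]
  have hΦtop : Tendsto Φ atTop (𝓝 A) := by
    rw [← hIoiU0]
    exact intervalIntegral_tendsto_integral_Ioi 0 hU0i.integrableOn tendsto_id
  have hΦnn : ∀ b, 0 ≤ b → 0 ≤ Φ b := by
    intro b hb
    have := hΦmono hb
    rwa [hΦ00] at this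
  have hΦle : ∀ b, Φ b ≤ A := by
    intro b
    rcases le_or_gt b 0 with h | h
    · have h1 := hΦmono h
      rw [hΦ00] at h1
      linarith
    · have h2 := hΦIoc 0 b h.le
      rw [hΦ00] at h2
      have h3 : ∫ x in Ioc (0:ℝ) b, U0 x ≤ ∫ a in Ioi (0:ℝ), U0 a := by
        refine setIntegral_mono_set hU0i.integrableOn ?_
          (HasSubset.Subset.eventuallyLE Ioc_subset_Ioi_self)
        exact ae_of_all _ (fun x => hU0nn x)
      rw [hIoiU0] at h3
      linarith
  -- quantile function
  set S : ℝ → Set ℝ := fun t => {b : ℝ | 0 < b ∧ t * A ≤ Φ b} with hSdef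
  set u : ℝ → ℝ := fun t => sInf (S t) with hudef
  have hSne : ∀ t ∈ Ioo (0:ℝ) 1, (S t).Nonempty := by
    intro t ht
    have htA : t * A < A := by nlinarith [ht.2, hA]
    have h1 : ∀ᶠ b in atTop, t * A ≤ Φ b := hΦtop.eventually (eventually_ge_nhds htA)
    obtain ⟨b, hb1, hb2⟩ := (h1.and (eventually_gt_atTop (0:ℝ))).exists
    exact ⟨b, hb2, hb1⟩
  have hSbdd : ∀ t, BddBelow (S t) := fun t => ⟨0, fun b hb => hb.1.le⟩
  have hupos : ∀ t ∈ Ioo (0:ℝ) 1, 0 < u t := by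
    intro t ht
    have htA : 0 < t * A := mul_pos ht.1 hA
    have h1 : ∀ᶠ b in 𝓝 (0:ℝ), Φ b < t * A := by
      have h2 : Tendsto Φ (𝓝 0) (𝓝 (Φ 0)) := hΦc.continuousAt
      have h3 : Iio (t * A) ∈ 𝓝 (Φ 0) := Iio_mem_nhds (by rw [hΦ00]; exact htA)
      exact h2 h3
    obtain ⟨ε, hε, hball⟩ := Metric.eventually_nhds_iff.1 h1
    refine lt_of_lt_of_le (half_pos hε) (le_csInf (hSne t ht) ?_)
    intro b hb
    by_contra hcon
    push_neg at hcon
    have hd : dist b 0 < ε := by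
      rw [Real.dist_eq, sub_zero, abs_of_pos hb.1]; linarith
    exact absurd hb.2 (not_le.2 (hball hd))
  have hΦu : ∀ t ∈ Ioo (0:ℝ) 1, Φ (u t) = t * A := by
    intro t ht
    have hge : t * A ≤ Φ (u t) := by
      have hcl : u t ∈ closure (S t) := csInf_mem_closure (hSne t ht) (hSbdd t)
      have hclosed : IsClosed {b : ℝ | t * A ≤ Φ b} := isClosed_le continuous_const hΦc
      exact (hclosed.closure_subset_iff.2 (fun b hb => hb.2)) hcl
    rcases eq_or_lt_of_le hge with h | h
    · exact h.symm
    · exfalso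
      have h1 : ∀ᶠ b in 𝓝 (u t), t * A < Φ b := hΦc.continuousAt (Ioi_mem_nhds h)
      have h2 : ∀ᶠ b in 𝓝[<] (u t), t * A < Φ b := h1.filter_mono nhdsWithin_le_nhds
      have h3 : ∀ᶠ b in 𝓝[<] (u t), 0 < b ∧ b < u t := by
        filter_upwards [Ioo_mem_nhdsLT_of_mem
          (⟨hupos t ht, le_refl _⟩ : u t ∈ Ioc (0:ℝ) (u t))] with b hb
        exact ⟨hb.1, hb.2⟩
      obtain ⟨b, hb1, hb2, hb3⟩ := (h2.and h3).exists
      have : u t ≤ b := csInf_le (hSbdd t) ⟨hb2, hb1.le⟩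
      linarith
  have humono : MonotoneOn u (Ioo (0:ℝ) 1) := by
    intro t1 _ t2 h2 h12
    apply csInf_le_csInf (hSbdd t1) (hSne t2 h2)
    intro b hb
    exact ⟨hb.1, le_trans (mul_le_mul_of_nonneg_right h12 hA.le) hb.2⟩
  -- measurable modification
  set uh : ℝ → ℝ := fun t => if t ∈ Ioo (0:ℝ) 1 then u t else 1 with huhdef
  have hpre : ∀ a : ℝ, {t | t ∈ Ioo (0:ℝ) 1 ∧ u t ≤ a} =
      if 0 < a then Ioo (0:ℝ) 1 ∩ Iic (Φ a / A) else ∅ := by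
    intro a
    split_ifs with hapos
    · ext t
      simp only [mem_setOf_eq, mem_inter_iff, mem_Iic]
      constructor
      · rintro ⟨ht, hta⟩
        refine ⟨ht, ?_⟩
        have h1 := hΦu t ht
        have h2 : Φ (u t) ≤ Φ a := hΦmono hta
        rw [h1] at h2
        rw [le_div_iff₀ hA]
        exact h2
      · rintro ⟨ht, hta⟩
        refine ⟨ht, ?_⟩
        have h2 : t * A ≤ Φ a := by rwa [← le_div_iff₀ hA]
        exact csInf_le (hSbdd t) ⟨hapos, h2⟩
    · ext t
      simp only [mem_setOf_eq, mem_empty_iff_false, iff_false, not_and]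
      intro ht hta
      have := hupos t ht
      push_neg at hapos
      linarith
  have huhm : Measurable uh := by
    apply measurable_of_Iic
    intro a
    have hset : uh ⁻¹' Iic a =
        {t | t ∈ Ioo (0:ℝ) 1 ∧ u t ≤ a} ∪
          (if (1:ℝ) ≤ a then (Ioo (0:ℝ) 1)ᶜ else ∅) := by
      ext t
      have hifpos : ∀ ht' : t ∈ Ioo (0:ℝ) 1, uh t = u t := fun ht' => if_pos ht'
      have hifneg : ∀ ht' : t ∉ Ioo (0:ℝ) 1, uh t = 1 := fun ht' => if_neg ht'
      by_cases ht : t ∈ Ioo (0:ℝ) 1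
      · simp only [mem_preimage, mem_Iic, hifpos ht, mem_union, mem_setOf_eq]
        constructor
        · intro h; exact Or.inl ⟨ht, h⟩
        · intro h
          rcases h with h | h
          · exact h.2
          · split_ifs at h with h1
            · exact absurd ht h
            · exact absurd h (notMem_empty t)
      · simp only [mem_preimage, mem_Iic, hifneg ht, mem_union, mem_setOf_eq]
        constructor
        · intro h
          refine Or.inr ?_
          rw [if_pos h]
          exact ht
        · intro h
          rcases h with h | h
          · exact absurd h.1 ht
          · split_ifs at h with h1
            · exact h1
            · exact absurd h (notMem_empty t)
    rw [hset, hpre a]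
    refine MeasurableSet.union ?_ ?_
    · split_ifs
      · exact (measurableSet_Ioo).inter measurableSet_Iic
      · exact MeasurableSet.empty
    · split_ifs
      · exact (measurableSet_Ioo).compl
      · exact MeasurableSet.empty
  -- the density measure
  set dens : ℝ → ℝ≥0∞ := fun a => ENNReal.ofReal (U0 a / A) with hdens
  have hdensm : Measurable dens := (hU0m.div_const A).ennreal_ofReal
  set ν : Measure ℝ := volume.withDensity dens with hν
  have hIic0 : ∀ a : ℝ, a ≤ 0 → ∫ x in Iic a, U0 x = 0 := by
    intro a ha
    have h1 : ∫ x in Iic a, U0 x = ∫ x in Iic a, Ubar x :=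
      integral_congr_ae (ae_restrict_of_ae hU0eq.symm)
    rw [h1, hUbar, setIntegral_indicator measurableSet_Ioi]
    have h2 : Iic a ∩ Ioi (0:ℝ) = ∅ := by
      ext x
      simp only [mem_inter_iff, mem_Iic, mem_Ioi, mem_empty_iff_false, iff_false, not_and,
        not_lt]
      intro hx
      linarith
    rw [h2]
    simp
  have hIicval : ∀ a : ℝ, 0 < a → ∫ x in Iic a, U0 x = Φ a := by
    intro a ha
    have hsplit : Iic a = Iic (0:ℝ) ∪ Ioc 0 a := (Iic_union_Ioc_eq_Iic ha.le).symm
    have hdisj : Disjoint (Iic (0:ℝ)) (Ioc 0 a) := by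
      refine Set.disjoint_left.2 ?_
      intro x hx hx2
      exact absurd hx2.1 (not_lt.2 hx)
    rw [hsplit, setIntegral_union hdisj measurableSet_Ioc hU0i.integrableOn
      hU0i.integrableOn, hIic0 0 le_rfl, zero_add]
    have h2 := hΦIoc 0 a ha.le
    rw [hΦ00] at h2
    linarith
  have hνIic : ∀ a : ℝ, ν (Iic a) = ENNReal.ofReal ((∫ x in Iic a, U0 x) / A) := by
    intro a
    rw [hν, withDensity_apply _ measurableSet_Iic, hdens]
    rw [← ofReal_integral_eq_lintegral_ofReal (hU0i.integrableOn.div_const A)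
      (ae_of_all _ (fun x => div_nonneg (hU0nn x) hA.le))]
    rw [integral_div]
  have hmap : Measure.map uh (volume.restrict (Ioo 0 1)) = ν := by
    have hfin1 : IsFiniteMeasure (Measure.map uh (volume.restrict (Ioo (0:ℝ) 1))) := by
      constructor
      rw [Measure.map_apply huhm MeasurableSet.univ]
      simp only [preimage_univ]
      rw [Measure.restrict_apply MeasurableSet.univ, univ_inter, Real.volume_Ioo]
      norm_num
    refine Measure.ext_of_Iic _ _ (fun a => ?_)
    rw [Measure.map_apply huhm measurableSet_Iic,
      Measure.restrict_apply (huhm measurableSet_Iic)]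
    have hpre2 : uh ⁻¹' Iic a ∩ Ioo (0:ℝ) 1 = {t | t ∈ Ioo (0:ℝ) 1 ∧ u t ≤ a} := by
      ext t
      constructor
      · rintro ⟨h1, h2⟩
        rw [mem_preimage, mem_Iic] at h1
        have heq : uh t = u t := if_pos h2
        rw [heq] at h1
        exact ⟨h2, h1⟩
      · rintro ⟨h1, h2⟩
        refine ⟨?_, h1⟩
        rw [mem_preimage, mem_Iic]
        have heq : uh t = u t := if_pos h1
        rw [heq]
        exact h2
    rw [hpre2, hpre a, hνIic a]
    split_ifs with hapos
    · rw [hIicval a hapos]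
      have hc0 : 0 ≤ Φ a / A := div_nonneg (hΦnn a hapos.le) hA.le
      have hc1 : Φ a / A ≤ 1 := by rw [div_le_one hA]; exact hΦle a
      rcases lt_or_eq_of_le hc1 with hc | hc
      · have : Ioo (0:ℝ) 1 ∩ Iic (Φ a / A) = Ioc 0 (Φ a / A) := by
          ext x
          simp only [mem_inter_iff, mem_Ioo, mem_Iic, mem_Ioc]
          constructor
          · rintro ⟨⟨h1, _⟩, h3⟩; exact ⟨h1, h3⟩
          · rintro ⟨h1, h2⟩; exact ⟨⟨h1, lt_of_le_of_lt h2 hc⟩, h2⟩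
        rw [this, Real.volume_Ioc, sub_zero]
      · have : Ioo (0:ℝ) 1 ∩ Iic (Φ a / A) = Ioo 0 1 := by
          ext x
          simp only [mem_inter_iff, mem_Ioo, mem_Iic]
          constructor
          · rintro ⟨h1, _⟩; exact h1
          · rintro h1; exact ⟨h1, by rw [hc]; exact h1.2.le⟩
        rw [this, Real.volume_Ioo, sub_zero, ← hc]
    · push_neg at hapos
      rw [hIic0 a hapos]
      simp
  have hnullpre : ∀ N : Set ℝ, MeasurableSet N → ν N = 0 →
      volume {t | t ∈ Ioo (0:ℝ) 1 ∧ u t ∈ N} = 0 := by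
    intro N hNm hN0
    have h1 : Measure.map uh (volume.restrict (Ioo 0 1)) N = 0 := by rw [hmap]; exact hN0
    rw [Measure.map_apply huhm hNm, Measure.restrict_apply (huhm hNm)] at h1
    refine measure_mono_null ?_ h1
    rintro t ⟨ht, htN⟩
    refine ⟨?_, ht⟩
    rw [mem_preimage]
    have heq : uh t = u t := if_pos ht
    rw [heq]
    exact htN
  have hνvol : ∀ N : Set ℝ, MeasurableSet N → volume N = 0 → ν N = 0 := by
    intro N hNm hN
    rw [hν, withDensity_apply _ hNm, Measure.restrict_eq_zero.2 hN]
    exact lintegral_zero_measure _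
  -- bad sets
  have hU0loc : LocallyIntegrable U0 volume := hU0i.locallyIntegrable
  have hbes0 := IsUnifLocDoublingMeasure.ae_tendsto_average (μ := (volume : Measure ℝ))
    hU0loc 1
  have hbes : ∀ᵐ x ∂(volume : Measure ℝ), ∀ (w δ : ℝ → ℝ),
      Tendsto δ (𝓝[>] (0:ℝ)) (𝓝[>] 0) →
      (∀ᶠ j in 𝓝[>] (0:ℝ), x ∈ closedBall (w j) (1 * δ j)) →
      Tendsto (fun j => ⨍ y in closedBall (w j) (δ j), U0 y) (𝓝[>] (0:ℝ)) (𝓝 (U0 x)) := by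
    filter_upwards [hbes0] with x hx
    intro w δ h1 h2
    exact hx w δ h1 h2
  obtain ⟨N1, hN1sub, hN1m, hN1vol⟩ := exists_measurable_superset_of_null (ae_iff.1 hbes)
  set N2 : Set ℝ := {a | U0 a ≤ 0} with hN2
  have hN2m : MeasurableSet N2 := measurableSet_le hU0m measurable_const
  have hN2ν : ν N2 = 0 := by
    rw [hν, withDensity_apply _ hN2m]
    have hz : ∀ᵐ a ∂(volume.restrict N2), dens a = 0 := by
      refine (ae_restrict_iff' hN2m).2 (ae_of_all _ ?_)
      intro a ha
      rw [hdens]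
      exact ENNReal.ofReal_eq_zero.2 (div_nonpos_of_nonpos_of_nonneg ha hA.le)
    rw [lintegral_congr_ae hz, lintegral_zero]
  obtain ⟨N3, hN3sub, hN3m, hN3vol⟩ := exists_measurable_superset_of_null (ae_iff.1 hU0eq)
  set Nbad : Set ℝ := N1 ∪ N2 ∪ N3 with hNbad
  have hNbadm : MeasurableSet Nbad := ((hN1m.union hN2m).union hN3m)
  have hNbadν : ν Nbad = 0 := by
    rw [hNbad]
    refine measure_union_null (measure_union_null ?_ hN2ν) ?_
    · exact hνvol N1 hN1m hN1vol
    · exact hνvol N3 hN3m hN3vol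
  have hdiffae := humono.ae_differentiableWithinAt_of_mem
  obtain ⟨Nd, hNdsub, hNdm, hNdvol⟩ := exists_measurable_superset_of_null (ae_iff.1 hdiffae)
  -- good set
  refine ⟨u, (Ioo (0:ℝ) 1 ∩ uh ⁻¹' Nbadᶜ) \ Nd, (((measurableSet_Ioo).inter
    (huhm hNbadm.compl)).diff hNdm), fun t ht => ht.1.1, ?_, humono, hupos, ?_⟩
  · -- null complement
    have hsub2 : Ioo (0:ℝ) 1 \ ((Ioo (0:ℝ) 1 ∩ uh ⁻¹' Nbadᶜ) \ Nd) ⊆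
        {t | t ∈ Ioo (0:ℝ) 1 ∧ u t ∈ Nbad} ∪ Nd := by
      intro t ht
      obtain ⟨ht1, ht2⟩ := ht
      by_cases htd : t ∈ Nd
      · exact Or.inr htd
      · refine Or.inl ⟨ht1, ?_⟩
        by_contra hcon
        refine ht2 ⟨⟨ht1, ?_⟩, htd⟩
        rw [mem_preimage]
        have heq : uh t = u t := if_pos ht1
        rw [heq]
        exact hcon
    exact measure_mono_null hsub2
      (measure_union_null (hnullpre Nbad hNbadm hNbadν) hNdvol)
  · -- pointwise properties
    rintro t ⟨⟨ht1, ht2⟩, htd⟩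
    rw [mem_preimage] at ht2
    have hequh : uh t = u t := if_pos ht1
    rw [hequh, mem_compl_iff, hNbad] at ht2
    have hN1' : u t ∉ N1 := fun h => ht2 (Or.inl (Or.inl h))
    have hN2' : u t ∉ N2 := fun h => ht2 (Or.inl (Or.inr h))
    have hN3' : u t ∉ N3 := fun h => ht2 (Or.inr h)
    have hdiff_t : DifferentiableAt ℝ u t := by
      have hP : t ∈ Ioo (0:ℝ) 1 → DifferentiableWithinAt ℝ u (Ioo 0 1) t := by
        by_contra hcon
        exact htd (hNdsub hcon)
      exact (hP ht1).differentiableAt (isOpen_Ioo.mem_nhds ht1)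
    have hval : U (u t) = U0 (u t) := by
      have h1 : Ubar (u t) = U0 (u t) := by
        by_contra hcon
        exact hN3' (hN3sub hcon)
      have h2 : Ubar (u t) = U (u t) := indicator_of_mem (hupos t ht1) U
      rw [← h2, h1]
    have hα : 0 < U0 (u t) := by
      by_contra hcon
      push_neg at hcon
      exact hN2' hcon
    refine ⟨hdiff_t, by rw [hval]; exact hα, ?_⟩
    rw [hval]
    -- the analytic derivative bound
    have hLeb : ∀ (w δ : ℝ → ℝ), Tendsto δ (𝓝[>] (0:ℝ)) (𝓝[>] 0) →
        (∀ᶠ j in 𝓝[>] (0:ℝ), u t ∈ closedBall (w j) (1 * δ j)) →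
        Tendsto (fun j => ⨍ y in closedBall (w j) (δ j), U0 y) (𝓝[>] (0:ℝ))
          (𝓝 (U0 (u t))) := by
      by_contra hcon
      exact hN1' (hN1sub hcon)
    set du := deriv u t with hdu
    have hder : HasDerivAt u du t := hdiff_t.hasDerivAt
    set mfun : ℝ → ℝ := fun h => (u (t+h) + u (t-h))/2 with hmfun
    set dfun : ℝ → ℝ := fun h => (u (t+h) - u (t-h))/2 with hdfun
    have hev1 : ∀ᶠ h in 𝓝[>] (0:ℝ),
        t + h ∈ Ioo (0:ℝ) 1 ∧ t - h ∈ Ioo (0:ℝ) 1 ∧ 0 < h := by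
      have hmemI : Ioo (0:ℝ) (min (1 - t) t) ∈ 𝓝[>] (0:ℝ) := by
        apply Ioo_mem_nhdsGT_of_mem
        constructor
        · exact le_refl 0
        · exact lt_min (by linarith [ht1.2]) ht1.1
      filter_upwards [hmemI] with h hh
      have h1 := hh.1
      have h2 := lt_min_iff.1 hh.2
      refine ⟨⟨by linarith [ht1.1], by linarith [h2.1]⟩,
        ⟨by linarith [h2.2], by linarith [ht1.2]⟩, h1⟩
    have hkey : ∀ᶠ h in 𝓝[>] (0:ℝ),
        0 < dfun h ∧ A * h ≤ dfun h * ⨍ y in closedBall (mfun h) (dfun h), U0 y ∧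
        u t ∈ closedBall (mfun h) (dfun h) := by
      filter_upwards [hev1] with h hh
      obtain ⟨hth, hth', hh0⟩ := hh
      have hle : u (t-h) ≤ u (t+h) := humono hth' hth (by linarith)
      have hle1 : u (t-h) ≤ u t := humono hth' ht1 (by linarith)
      have hle2 : u t ≤ u (t+h) := humono ht1 hth (by linarith)
      have hΦd : Φ (u (t+h)) - Φ (u (t-h)) = 2*h*A := by
        rw [hΦu (t+h) hth, hΦu (t-h) hth']
        ring
      have hInt : ∫ x in Ioc (u (t-h)) (u (t+h)), U0 x = 2*h*A := by
        rw [← hΦIoc _ _ hle, hΦd]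
      have hdpos : 0 < dfun h := by
        rcases lt_or_eq_of_le hle with hlt | heq
        · rw [hdfun]; simp only []; linarith
        · exfalso
          have : Ioc (u (t-h)) (u (t+h)) = ∅ := by rw [heq]; exact Ioc_self _
          rw [this] at hInt
          simp at hInt
          rcases hInt with h' | h'
          · exact hh0.ne' h'
          · exact hA.ne' h'
      have hball : closedBall (mfun h) (dfun h) = Icc (u (t-h)) (u (t+h)) := by
        rw [Real.closedBall_eq_Icc, hmfun, hdfun]
        congr 1 <;> ring
      have hmem : u t ∈ closedBall (mfun h) (dfun h) := by
        rw [hball]; exact ⟨hle1, hle2⟩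
      have hIle : ∫ x in Ioc (u (t-h)) (u (t+h)), U0 x ≤
          ∫ x in closedBall (mfun h) (dfun h), U0 x := by
        rw [hball]
        refine setIntegral_mono_set hU0i.integrableOn (ae_of_all _ (fun x => hU0nn x))
          (HasSubset.Subset.eventuallyLE Ioc_subset_Icc_self)
      have hvolball : (volume (closedBall (mfun h) (dfun h))).toReal = 2 * dfun h := by
        rw [Real.volume_closedBall, ENNReal.toReal_ofReal (by linarith)]
      have havg : ∫ x in closedBall (mfun h) (dfun h), U0 x =
          2 * dfun h * ⨍ y in closedBall (mfun h) (dfun h), U0 y := by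
        rw [setAverage_eq, measureReal_def, hvolball, smul_eq_mul]
        field_simp
      refine ⟨hdpos, ?_, hmem⟩
      rw [havg] at hIle
      rw [hInt] at hIle
      nlinarith
    -- slope limits
    have hslope := hasDerivAt_iff_tendsto_slope.1 hder
    have hmapP : Tendsto (fun h : ℝ => t + h) (𝓝[>] (0:ℝ)) (𝓝[≠] t) := by
      apply tendsto_nhdsWithin_of_tendsto_nhds_of_eventually_within
      · have : Tendsto (fun h : ℝ => t + h) (𝓝 (0:ℝ)) (𝓝 (t + 0)) :=
          tendsto_const_nhds.add tendsto_id
        rw [add_zero] at this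
        exact this.mono_left nhdsWithin_le_nhds
      · filter_upwards [self_mem_nhdsWithin] with h hh
        simp only [mem_compl_iff, mem_singleton_iff]
        intro hcon
        have : h = 0 := by linarith [hcon]
        exact absurd this (ne_of_gt hh)
    have hmapM : Tendsto (fun h : ℝ => t - h) (𝓝[>] (0:ℝ)) (𝓝[≠] t) := by
      apply tendsto_nhdsWithin_of_tendsto_nhds_of_eventually_within
      · have : Tendsto (fun h : ℝ => t - h) (𝓝 (0:ℝ)) (𝓝 (t - 0)) :=
          tendsto_const_nhds.sub tendsto_id
        rw [sub_zero] at this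
        exact this.mono_left nhdsWithin_le_nhds
      · filter_upwards [self_mem_nhdsWithin] with h hh
        simp only [mem_compl_iff, mem_singleton_iff]
        intro hcon
        have : h = 0 := by linarith [hcon]
        exact absurd this (ne_of_gt hh)
    have hT1 : Tendsto (fun h : ℝ => (u (t+h) - u t)/h) (𝓝[>] (0:ℝ)) (𝓝 du) := by
      have h1 := hslope.comp hmapP
      refine h1.congr' ?_
      filter_upwards [self_mem_nhdsWithin] with h hh
      rw [Function.comp_apply, slope_def_field]
      congr 1
      ring
    have hT2 : Tendsto (fun h : ℝ => (u t - u (t-h))/h) (𝓝[>] (0:ℝ)) (𝓝 du) := by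
      have h1 := hslope.comp hmapM
      refine h1.congr' ?_
      filter_upwards [self_mem_nhdsWithin] with h hh
      rw [Function.comp_apply, slope_def_field]
      rw [show t - h - t = -h by ring]
      rw [div_eq_div_iff (by simpa using (ne_of_gt hh)) (ne_of_gt hh)]
      ring
    have hTd : Tendsto (fun h : ℝ => dfun h / h) (𝓝[>] (0:ℝ)) (𝓝 du) := by
      have h1 := (hT1.add hT2).div_const 2
      have h2 : (du + du)/2 = du := by ring
      rw [h2] at h1
      refine h1.congr' ?_
      filter_upwards [self_mem_nhdsWithin] with h hh
      have hne : h ≠ 0 := ne_of_gt hh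
      rw [← add_div, hdfun]
      simp only []
      rw [div_div, div_div, mul_comm h 2]
      congr 1
      ring
    have hTd0 : Tendsto dfun (𝓝[>] (0:ℝ)) (𝓝[>] (0:ℝ)) := by
      rw [tendsto_nhdsWithin_iff]
      constructor
      · have h1 : Tendsto (fun h : ℝ => (dfun h / h) * h) (𝓝[>] (0:ℝ)) (𝓝 (du * 0)) :=
          hTd.mul (tendsto_id.mono_left nhdsWithin_le_nhds)
        rw [mul_zero] at h1
        refine h1.congr' ?_
        filter_upwards [self_mem_nhdsWithin] with h hh
        have hne : h ≠ 0 := ne_of_gt hh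
        field_simp
      · filter_upwards [hkey] with h hh using hh.1
    have hTavg := hLeb mfun dfun hTd0 (by
      filter_upwards [hkey] with h hh
      rw [one_mul]
      exact hh.2.2)
    have hfinal : Tendsto
        (fun h : ℝ => (dfun h / h) * ⨍ y in closedBall (mfun h) (dfun h), U0 y)
        (𝓝[>] (0:ℝ)) (𝓝 (du * U0 (u t))) := hTd.mul hTavg
    refine ge_of_tendsto hfinal ?_
    filter_upwards [hkey, hev1] with h hh hh2
    obtain ⟨hd, hineq, _⟩ := hh
    have hh0 : 0 < h := hh2.2.2
    rw [div_mul_eq_mul_div, le_div_iff₀ hh0]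
    calc A * h ≤ dfun h * ⨍ y in closedBall (mfun h) (dfun h), U0 y := hineq
      _ = dfun h * (⨍ y in closedBall (mfun h) (dfun h), U0 y) := by ring

lemma core_1d (p : ℝ) (hp : 0 < p) (U V W : ℝ → ℝ)
    (hU0 : ∀ a ∈ Ioi (0:ℝ), 0 ≤ U a) (hV0 : ∀ b ∈ Ioi (0:ℝ), 0 ≤ V b)
    (hW0 : ∀ c ∈ Ioi (0:ℝ), 0 ≤ W c)
    (hUi : IntegrableOn U (Ioi 0)) (hVi : IntegrableOn V (Ioi 0))
    (hWi : IntegrableOn W (Ioi 0))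
    (hA : 0 < ∫ a in Ioi (0:ℝ), U a) (hB : 0 < ∫ b in Ioi (0:ℝ), V b)
    (hcon : ∀ a ∈ Ioi (0:ℝ), ∀ b ∈ Ioi (0:ℝ), 0 < U a → 0 < V b →
      (U a ^ (-(p+1)⁻¹) + V b ^ (-(p+1)⁻¹)) ^ (-(p+1)) ≤ W (a + b)) :
    ((∫ a in Ioi (0:ℝ), U a) ^ (-1/p) + (∫ b in Ioi (0:ℝ), V b) ^ (-1/p)) ^ (-p)
      ≤ ∫ c in Ioi (0:ℝ), W c := by
  obtain ⟨u, su, hsum, hsuss, hsunull, humono, hupos, hugood⟩ :=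
    quantile_side U hU0 hUi hA
  obtain ⟨v, sv, hsvm, hsvss, hsvnull, hvmono, hvpos, hvgood⟩ :=
    quantile_side V hV0 hVi hB
  set A : ℝ := ∫ a in Ioi (0:ℝ), U a with hAdef
  set B : ℝ := ∫ b in Ioi (0:ℝ), V b with hBdef
  set T : ℝ := (A ^ (-1/p) + B ^ (-1/p)) ^ (-p) with hTdef
  set s : Set ℝ := su ∩ sv with hsdef
  set c : ℝ → ℝ := fun t => u t + v t with hcdef
  have hsm : MeasurableSet s := hsum.inter hsvm
  have hss : s ⊆ Ioo 0 1 := fun t ht => hsuss ht.1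
  have hnull : volume (Ioo (0:ℝ) 1 \ s) = 0 := by
    have hsub : Ioo (0:ℝ) 1 \ s ⊆ (Ioo 0 1 \ su) ∪ (Ioo 0 1 \ sv) := by
      intro t ht
      by_cases h3 : t ∈ su
      · refine Or.inr ⟨ht.1, fun hh => ht.2 ⟨h3, hh⟩⟩
      · exact Or.inl ⟨ht.1, h3⟩
    exact measure_mono_null hsub (measure_union_null hsunull hsvnull)
  have hvol : volume s = 1 := by
    have h1 : s = Ioo (0:ℝ) 1 \ (Ioo 0 1 \ s) := (Set.diff_diff_cancel_left hss).symm
    rw [h1, measure_diff_null hnull, Real.volume_Ioo]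
    norm_num
  -- pointwise facts on s
  have hpt : ∀ t ∈ s, 0 < deriv u t ∧ 0 < deriv v t ∧
      T ≤ (deriv u t + deriv v t) * W (c t) := by
    intro t ht
    obtain ⟨hdu, hα, hAle⟩ := hugood t ht.1
    obtain ⟨hdv, hβ, hBle⟩ := hvgood t ht.2
    have hdu0 : 0 < deriv u t := by nlinarith
    have hdv0 : 0 < deriv v t := by nlinarith
    refine ⟨hdu0, hdv0, ?_⟩
    have h1 := pi_ineq p A B (U (u t)) (V (v t)) hp hA hB hα hβ
    have h2 : A / U (u t) + B / V (v t) ≤ deriv u t + deriv v t := by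
      have h3 : A / U (u t) ≤ deriv u t := (div_le_iff₀ hα).2 hAle
      have h4 : B / V (v t) ≤ deriv v t := (div_le_iff₀ hβ).2 hBle
      linarith
    have h5 : (0:ℝ) ≤ (U (u t) ^ (-(p+1)⁻¹) + V (v t) ^ (-(p+1)⁻¹)) ^ (-(p+1)) :=
      Real.rpow_nonneg (add_nonneg (Real.rpow_nonneg hα.le _) (Real.rpow_nonneg hβ.le _)) _
    have h6 := hcon (u t) (hupos t (hss ht)) (v t) (hvpos t (hss ht)) hα hβ
    calc T ≤ (A / U (u t) + B / V (v t)) *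
          (U (u t) ^ (-(p+1)⁻¹) + V (v t) ^ (-(p+1)⁻¹)) ^ (-(p+1)) := h1
      _ ≤ (deriv u t + deriv v t) *
          (U (u t) ^ (-(p+1)⁻¹) + V (v t) ^ (-(p+1)⁻¹)) ^ (-(p+1)) :=
          mul_le_mul_of_nonneg_right h2 h5
      _ ≤ (deriv u t + deriv v t) * W (c t) :=
          mul_le_mul_of_nonneg_left h6 (by linarith)
  have hcmono : MonotoneOn c (Ioo (0:ℝ) 1) := fun t1 h1 t2 h2 h12 =>
    add_le_add (humono h1 h2 h12) (hvmono h1 h2 h12)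
  have hder : ∀ t ∈ s, HasDerivWithinAt c (deriv u t + deriv v t) s t := fun t ht =>
    (((hugood t ht.1).1.hasDerivAt).add ((hvgood t ht.2).1.hasDerivAt)).hasDerivWithinAt
  have hinj : InjOn c s := by
    have hkey : ∀ t1 ∈ s, ∀ t2 ∈ s, t1 < t2 → c t1 ≠ c t2 := by
      intro t1 h1 t2 h2 hlt he
      have hd : HasDerivAt c (deriv u t1 + deriv v t1) t1 :=
        ((hugood t1 h1.1).1.hasDerivAt).add ((hvgood t1 h1.2).1.hasDerivAt)
      have hdpos : 0 < deriv u t1 + deriv v t1 := by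
        obtain ⟨hdu0, hdv0, _⟩ := hpt t1 h1
        linarith
      have hconst : ∀ t' ∈ Ioc t1 t2, c t' = c t1 := by
        intro t' ht'
        have ht'mem : t' ∈ Ioo (0:ℝ) 1 :=
          ⟨lt_trans (hss h1).1 ht'.1, lt_of_le_of_lt ht'.2 (hss h2).2⟩
        have h3 : c t1 ≤ c t' := hcmono (hss h1) ht'mem ht'.1.le
        have h4 : c t' ≤ c t2 := hcmono ht'mem (hss h2) ht'.2
        rw [← he] at h4
        linarith
      have hsl := (hasDerivAt_iff_tendsto_slope.1 hd).mono_left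
        (nhdsWithin_mono t1 (fun x hx => ne_of_gt hx : Ioi t1 ⊆ {t1}ᶜ))
      have hzero : slope c t1 =ᶠ[𝓝[>] t1] (fun _ => (0:ℝ)) := by
        filter_upwards [Ioc_mem_nhdsGT_of_mem (⟨le_refl t1, hlt⟩ : t1 ∈ Ico t1 t2)]
          with t' ht'
        rw [slope_def_field, hconst t' ht']
        simp
      have hsl0 : Tendsto (slope c t1) (𝓝[>] t1) (𝓝 (0:ℝ)) := by
        rw [tendsto_congr' hzero]
        exact tendsto_const_nhds
      have := tendsto_nhds_unique hsl hsl0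
      rw [this] at hdpos
      exact lt_irrefl 0 hdpos
    intro t1 h1 t2 h2 he
    by_contra hne
    rcases lt_or_gt_of_ne hne with hlt | hlt
    · exact hkey t1 h1 t2 h2 hlt he
    · exact hkey t2 h2 t1 h1 hlt he.symm
  have himg : c '' s ⊆ Ioi (0:ℝ) := by
    rintro _ ⟨t, ht, rfl⟩
    exact add_pos (hupos t (hss ht)) (hvpos t (hss ht))
  have heq := integral_image_eq_integral_abs_deriv_smul hsm hder hinj W
  have hWiimg : IntegrableOn W (c '' s) := hWi.mono_set himg
  have hint : IntegrableOn (fun t => |deriv u t + deriv v t| • W (c t)) s :=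
    (integrableOn_image_iff_integrableOn_abs_deriv_smul hsm hder hinj W).1 hWiimg
  have hTle : ∀ t ∈ s, T ≤ |deriv u t + deriv v t| • W (c t) := by
    intro t ht
    obtain ⟨hdu0, hdv0, hT⟩ := hpt t ht
    rw [smul_eq_mul, abs_of_pos (by linarith : 0 < deriv u t + deriv v t)]
    exact hT
  have h2 : T ≤ ∫ t in s, |deriv u t + deriv v t| • W (c t) := by
    have hTc : IntegrableOn (fun _ : ℝ => T) s :=
      integrableOn_const (by rw [hvol]; exact ENNReal.one_ne_top)
    calc T = ∫ _ in s, T := by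
          rw [setIntegral_const, measureReal_def, hvol, ENNReal.toReal_one, one_smul]
      _ ≤ ∫ t in s, |deriv u t + deriv v t| • W (c t) :=
          setIntegral_mono_on hTc hint hsm hTle
  have h3 : ∫ x in c '' s, W x ≤ ∫ x in Ioi (0:ℝ), W x := by
    refine setIntegral_mono_set hWi ?_ himg.eventuallyLE
    exact (ae_restrict_iff' measurableSet_Ioi).2 (ae_of_all _ hW0)
  calc T ≤ ∫ t in s, |deriv u t + deriv v t| • W (c t) := h2
    _ = ∫ x in c '' s, W x := heq.symm
    _ ≤ ∫ x in Ioi (0:ℝ), W x := h3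

lemma mean_step (p γ : ℝ) (hp : 0 < p) (hγ : -1/(p+1) ≤ γ) (θ fa fb fc : ℝ)
    (hθ0 : 0 ≤ θ) (hθ1 : θ ≤ 1) (hfa : 0 < fa) (hfb : 0 < fb) (hfc : 0 < fc)
    (hneg : γ < 0 → fc ^ γ ≤ θ * fa ^ γ + (1-θ) * fb ^ γ)
    (hzero : γ = 0 → θ * Real.log fa + (1-θ) * Real.log fb ≤ Real.log fc)
    (hpos : 0 < γ → θ * fa ^ γ + (1-θ) * fb ^ γ ≤ fc ^ γ) :
    fc ^ (-(p+1)⁻¹) ≤ θ * fa ^ (-(p+1)⁻¹) + (1-θ) * fb ^ (-(p+1)⁻¹) := by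
  have hp1 : (0:ℝ) < p+1 := by linarith
  have hq0 : (0:ℝ) < (p+1)⁻¹ := inv_pos.2 hp1
  have strip : ∀ X Y e : ℝ, 0 < e → 0 ≤ X → 0 ≤ Y → X ^ e ≤ Y ^ e → X ≤ Y := by
    intro X Y e he hX hY h
    have h2 := Real.rpow_le_rpow (Real.rpow_nonneg hX e) h (inv_nonneg.2 he.le)
    rwa [← Real.rpow_mul hX, ← Real.rpow_mul hY, mul_inv_cancel₀ he.ne',
      Real.rpow_one, Real.rpow_one] at h2
  have final : fa ^ θ * fb ^ (1-θ) ≤ fc →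
      fc ^ (-(p+1)⁻¹) ≤ θ * fa ^ (-(p+1)⁻¹) + (1-θ) * fb ^ (-(p+1)⁻¹) := by
    intro hgm
    have hprod : 0 < fa ^ θ * fb ^ (1-θ) :=
      mul_pos (Real.rpow_pos_of_pos hfa _) (Real.rpow_pos_of_pos hfb _)
    have h1 := Real.rpow_le_rpow_of_nonpos hprod hgm (neg_nonpos.2 hq0.le)
    have hxa : (fa ^ θ) ^ (-(p+1)⁻¹) = (fa ^ (-(p+1)⁻¹)) ^ θ := by
      rw [← Real.rpow_mul hfa.le, ← Real.rpow_mul hfa.le, mul_comm]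
    have hxb : (fb ^ (1-θ)) ^ (-(p+1)⁻¹) = (fb ^ (-(p+1)⁻¹)) ^ (1-θ) := by
      rw [← Real.rpow_mul hfb.le, ← Real.rpow_mul hfb.le, mul_comm]
    have h2 : (fa ^ θ * fb ^ (1-θ)) ^ (-(p+1)⁻¹)
        = (fa ^ (-(p+1)⁻¹)) ^ θ * (fb ^ (-(p+1)⁻¹)) ^ (1-θ) := by
      rw [Real.mul_rpow (Real.rpow_nonneg hfa.le _) (Real.rpow_nonneg hfb.le _), hxa, hxb]
    have h3 := Real.geom_mean_le_arith_mean2_weighted hθ0 (by linarith : (0:ℝ) ≤ 1-θ)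
      (Real.rpow_nonneg hfa.le (-(p+1)⁻¹)) (Real.rpow_nonneg hfb.le (-(p+1)⁻¹))
      (by ring : θ + (1-θ) = 1)
    calc fc ^ (-(p+1)⁻¹) ≤ (fa ^ θ * fb ^ (1-θ)) ^ (-(p+1)⁻¹) := h1
      _ = (fa ^ (-(p+1)⁻¹)) ^ θ * (fb ^ (-(p+1)⁻¹)) ^ (1-θ) := h2
      _ ≤ θ * fa ^ (-(p+1)⁻¹) + (1-θ) * fb ^ (-(p+1)⁻¹) := h3
  rcases lt_trichotomy γ 0 with hγ' | hγ' | hγ'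
  · have hig := hneg hγ'
    set sγ : ℝ := -γ * (p+1) with hsdef
    have hs0 : 0 < sγ := by
      have : 0 < -γ := by linarith
      positivity
    have hs1 : sγ ≤ 1 := by
      have h6 : -(1/(p+1)) ≤ γ := by rw [← neg_div]; exact hγ
      have h7 : -γ ≤ 1/(p+1) := by linarith
      calc sγ = -γ * (p+1) := hsdef
        _ ≤ 1/(p+1) * (p+1) := by
            apply mul_le_mul_of_nonneg_right h7 hp1.le
        _ = 1 := by field_simp
    have key : ∀ z : ℝ, 0 < z → z ^ γ = (z ^ (-(p+1)⁻¹)) ^ sγ := by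
      intro z hz
      rw [← Real.rpow_mul hz.le]
      congr 1
      rw [hsdef]
      field_simp
    rw [key fa hfa, key fb hfb, key fc hfc] at hig
    have hcon := (Real.concaveOn_rpow hs0.le hs1).2
      (Set.mem_Ici.2 (Real.rpow_nonneg hfa.le (-(p+1)⁻¹)))
      (Set.mem_Ici.2 (Real.rpow_nonneg hfb.le (-(p+1)⁻¹))) hθ0 (by linarith)
      (by ring : θ + (1-θ) = 1)
    simp only [smul_eq_mul] at hcon
    exact strip _ _ sγ hs0 (Real.rpow_nonneg hfc.le _)
      (add_nonneg (mul_nonneg hθ0 (Real.rpow_nonneg hfa.le _))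
        (mul_nonneg (by linarith) (Real.rpow_nonneg hfb.le _))) (le_trans hig hcon)
  · have hig := hzero hγ'
    apply final
    have hprod : 0 < fa ^ θ * fb ^ (1-θ) :=
      mul_pos (Real.rpow_pos_of_pos hfa _) (Real.rpow_pos_of_pos hfb _)
    have h1 : Real.log (fa ^ θ * fb ^ (1-θ)) = θ * Real.log fa + (1-θ) * Real.log fb := by
      rw [Real.log_mul (Real.rpow_pos_of_pos hfa θ).ne' (Real.rpow_pos_of_pos hfb _).ne',
        Real.log_rpow hfa, Real.log_rpow hfb]
    have h2 : Real.log (fa ^ θ * fb ^ (1-θ)) ≤ Real.log fc := by rw [h1]; exact hig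
    have h3 := Real.exp_le_exp.2 h2
    rwa [Real.exp_log hprod, Real.exp_log hfc] at h3
  · have hig := hpos hγ'
    apply final
    have h3 := Real.geom_mean_le_arith_mean2_weighted hθ0 (by linarith : (0:ℝ) ≤ 1-θ)
      (Real.rpow_nonneg hfa.le γ) (Real.rpow_nonneg hfb.le γ) (by ring : θ + (1-θ) = 1)
    have hxa : (fa ^ γ) ^ θ = (fa ^ θ) ^ γ := by
      rw [← Real.rpow_mul hfa.le, ← Real.rpow_mul hfa.le, mul_comm]
    have hxb : (fb ^ γ) ^ (1-θ) = (fb ^ (1-θ)) ^ γ := by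
      rw [← Real.rpow_mul hfb.le, ← Real.rpow_mul hfb.le, mul_comm]
    have h4 : (fa ^ θ * fb ^ (1-θ)) ^ γ ≤ fc ^ γ := by
      rw [Real.mul_rpow (Real.rpow_nonneg hfa.le _) (Real.rpow_nonneg hfb.le _),
        ← hxa, ← hxb]
      exact le_trans h3 hig
    exact strip _ _ γ hγ' (by positivity) hfc.le h4

lemma image_inv_Ioi : (fun r : ℝ => r⁻¹) '' Ioi 0 = Ioi 0 := by
  ext a
  simp only [mem_image, mem_Ioi]
  constructor
  · rintro ⟨r, hr, rfl⟩; exact inv_pos.2 hr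
  · intro ha; exact ⟨a⁻¹, inv_pos.2 ha, inv_inv a⟩

lemma integral_inv_subst (g : ℝ → ℝ) :
    ∫ r in Ioi (0:ℝ), g r = ∫ a in Ioi (0:ℝ), |(-(a^2)⁻¹)| • g a⁻¹ := by
  have h := integral_image_eq_integral_abs_deriv_smul (measurableSet_Ioi (a := (0:ℝ)))
    (f' := fun a : ℝ => -(a^2)⁻¹)
    (fun a ha => (hasDerivAt_inv (ne_of_gt ha)).hasDerivWithinAt)
    (fun a _ b _ h => inv_injective h) g
  rw [image_inv_Ioi] at h
  exact h

lemma integrable_inv_subst (g : ℝ → ℝ) :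
    IntegrableOn g (Ioi 0) ↔ IntegrableOn (fun a : ℝ => |(-(a^2)⁻¹)| • g a⁻¹) (Ioi 0) := by
  have h := integrableOn_image_iff_integrableOn_abs_deriv_smul
    (measurableSet_Ioi (a := (0:ℝ))) (f' := fun a : ℝ => -(a^2)⁻¹)
    (fun a ha => (hasDerivAt_inv (ne_of_gt ha)).hasDerivWithinAt)
    (fun a _ b _ h => inv_injective h) g
  rw [image_inv_Ioi] at h
  exact h

lemma image_scale_Ioi (c : ℝ) (hc : 0 < c) : (fun a : ℝ => c⁻¹ * a) '' Ioi 0 = Ioi 0 := by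
  ext r
  simp only [mem_image, mem_Ioi]
  constructor
  · rintro ⟨a, ha, rfl⟩; exact mul_pos (inv_pos.2 hc) ha
  · intro hr; exact ⟨c * r, mul_pos hc hr, by field_simp⟩

lemma integral_scale_subst (g : ℝ → ℝ) (c : ℝ) (hc : 0 < c) :
    ∫ r in Ioi (0:ℝ), g r = ∫ a in Ioi (0:ℝ), |c⁻¹| • g (c⁻¹ * a) := by
  have h := integral_image_eq_integral_abs_deriv_smul (measurableSet_Ioi (a := (0:ℝ)))
    (f' := fun _ : ℝ => c⁻¹)
    (fun a _ => (by simpa using ((hasDerivAt_id a).const_mul c⁻¹).hasDerivWithinAt :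
      HasDerivWithinAt (fun a : ℝ => c⁻¹ * a) c⁻¹ (Ioi 0) a))
    (fun a _ b _ h => mul_left_cancel₀ (inv_ne_zero hc.ne') h) g
  rw [image_scale_Ioi c hc] at h
  exact h

end BallBobkov

open BallBobkov

/-- Ball–Bobkov theorem: `F` is a gauge. -/
theorem ball_bobkov_gauge (n : ℕ) (p γ : ℝ) (hp : 0 < p) (hγ : -1 / (p + 1) ≤ γ)
    (f : EuclideanSpace ℝ (Fin n) → ℝ) (hf0 : ∀ x, 0 ≤ f x) (hfne : ∃ x, 0 < f x)
    (hγneg : γ < 0 → ConvexOn ℝ {x | 0 < f x} fun x => f x ^ γ)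
    (hγzero : γ = 0 → ConcaveOn ℝ {x | 0 < f x} fun x => Real.log (f x))
    (hγpos : 0 < γ → ConcaveOn ℝ {x | 0 < f x} fun x => f x ^ γ)
    (F : EuclideanSpace ℝ (Fin n) → ℝ)
    (hF : ∀ x, F x = (∫ r in Set.Ioi (0 : ℝ), f (r • x) * r ^ (p - 1)) ^ (-1 / p))
    (hfin : ∀ x, x ≠ 0 →
      IntegrableOn (fun r : ℝ => f (r • x) * r ^ (p - 1)) (Set.Ioi 0))
    (hposint : ∀ x, x ≠ 0 → 0 < ∫ r in Set.Ioi (0 : ℝ), f (r • x) * r ^ (p - 1)) :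
    ConvexOn ℝ Set.univ F ∧ ∀ c : ℝ, 0 < c → ∀ x, F (c • x) = c * F x := by
  classical
  set G : EuclideanSpace ℝ (Fin n) → ℝ :=
    fun x => ∫ r in Ioi (0:ℝ), f (r • x) * r ^ (p - 1) with hGdef
  have hFx : ∀ x, F x = G x ^ (-1 / p) := hF
  have hGnn : ∀ x, 0 ≤ G x := by
    intro x
    apply setIntegral_nonneg measurableSet_Ioi
    intro r hr
    exact mul_nonneg (hf0 _) (Real.rpow_nonneg (le_of_lt hr) _)
  have hFnn : ∀ x, 0 ≤ F x := by
    intro x; rw [hFx x]; exact Real.rpow_nonneg (hGnn x) _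
  have hF0 : F 0 = 0 := by
    have h0 : G 0 = 0 := by
      rcases eq_or_lt_of_le (hf0 0) with h | h
      · have : (fun r : ℝ => f (r • (0:EuclideanSpace ℝ (Fin n))) * r ^ (p - 1))
            = fun _ => 0 := by
          funext r; rw [smul_zero, ← h, zero_mul]
        rw [hGdef]; simp only [this]; simp
      · apply integral_undef
        intro hint
        have hint' : IntegrableOn (fun r : ℝ => f 0 * r ^ (p - 1)) (Ioi 1) := by
          have heq : (fun r : ℝ => f (r • (0:EuclideanSpace ℝ (Fin n))) * r ^ (p - 1))
              = fun r : ℝ => f 0 * r ^ (p - 1) := by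
            funext r; rw [smul_zero]
          rw [heq] at hint
          have hint0 : IntegrableOn (fun r : ℝ => f 0 * r ^ (p - 1)) (Ioi 0) := hint
          exact hint0.mono_set (Ioi_subset_Ioi zero_le_one)
        have h3 : IntegrableOn (fun r : ℝ => (f 0)⁻¹ * (f 0 * r ^ (p - 1))) (Ioi 1) :=
          hint'.const_mul _
        have h2 : IntegrableOn (fun r : ℝ => r ^ (p - 1)) (Ioi 1) := by
          refine h3.congr_fun (fun r _ => ?_) measurableSet_Ioi
          field_simp
        rw [integrableOn_Ioi_rpow_iff zero_lt_one] at h2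
        linarith
    rw [hFx 0, h0]
    exact Real.zero_rpow (div_ne_zero (by norm_num) hp.ne')
  have hhom : ∀ c : ℝ, 0 < c → ∀ x, F (c • x) = c * F x := by
    intro c hc x
    rcases eq_or_ne x 0 with rfl | hx
    · rw [smul_zero, hF0, mul_zero]
    · have hgc : G (c • x) = c ^ (-p) * G x := by
        have h1 := integral_scale_subst (fun r => f (r • (c • x)) * r ^ (p - 1)) c hc
        have h2 : ∀ a ∈ Ioi (0:ℝ),
            |c⁻¹| • (f ((c⁻¹ * a) • (c • x)) * (c⁻¹ * a) ^ (p - 1))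
              = c ^ (-p) * (f (a • x) * a ^ (p - 1)) := by
          intro a ha
          have ha' : (0:ℝ) < a := ha
          have hsm : (c⁻¹ * a) • (c • x) = a • x := by
            rw [smul_smul]
            congr 1
            field_simp
          have hcc : c⁻¹ * (c⁻¹ ^ (p-1)) = c ^ (-p) := by
            rw [Real.inv_rpow hc.le, ← Real.rpow_neg hc.le, ← Real.rpow_neg_one c,
              ← Real.rpow_add hc]
            congr 1; ring
          rw [hsm, smul_eq_mul, abs_of_nonneg (inv_nonneg.2 hc.le),
            Real.mul_rpow (inv_nonneg.2 hc.le) ha'.le, ← hcc]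
          ring
        calc G (c • x)
            = ∫ a in Ioi (0:ℝ), |c⁻¹| • (f ((c⁻¹ * a) • (c • x)) * (c⁻¹ * a) ^ (p - 1)) := h1
          _ = ∫ a in Ioi (0:ℝ), c ^ (-p) * (f (a • x) * a ^ (p - 1)) :=
              setIntegral_congr_fun measurableSet_Ioi (fun a ha => h2 a ha)
          _ = c ^ (-p) * G x := by rw [integral_const_mul]
      rw [hFx, hFx, hgc, Real.mul_rpow (Real.rpow_nonneg hc.le _) (hGnn x)]
      have h3 : (c ^ (-p)) ^ (-1/p) = c := by
        rw [← Real.rpow_mul hc.le]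
        have : (-p) * (-1/p) = 1 := by field_simp
        rw [this, Real.rpow_one]
      rw [h3]
  have hsub : ∀ x y : EuclideanSpace ℝ (Fin n), x ≠ 0 → y ≠ 0 → x + y ≠ 0 →
      F (x + y) ≤ F x + F y := by
    intro x y hx hy hz
    have hp1 : (0:ℝ) < p + 1 := by linarith
    have key : ∀ w : EuclideanSpace ℝ (Fin n), w ≠ 0 →
        (∫ a in Ioi (0:ℝ), f (a⁻¹ • w) * a ^ (-(p+1))) = G w ∧
        IntegrableOn (fun a : ℝ => f (a⁻¹ • w) * a ^ (-(p+1))) (Ioi 0) := by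
      intro w hw
      have hpt : ∀ a ∈ Ioi (0:ℝ),
          |(-(a^2)⁻¹)| • (f ((a⁻¹) • w) * (a⁻¹) ^ (p - 1))
            = f (a⁻¹ • w) * a ^ (-(p+1)) := by
        intro a ha
        have ha' : (0:ℝ) < a := ha
        have e2 : ((a:ℝ)^2)⁻¹ = a ^ (-2:ℝ) := by
          rw [← Real.rpow_natCast a 2, ← Real.rpow_neg ha'.le]
          norm_num
        have e : ((a:ℝ)^2)⁻¹ * (a⁻¹ ^ (p-1)) = a ^ (-(p+1)) := by
          rw [Real.inv_rpow ha'.le, ← Real.rpow_neg ha'.le, e2, ← Real.rpow_add ha']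
          congr 1; ring
        rw [smul_eq_mul, abs_neg, abs_of_nonneg (inv_nonneg.2 (sq_nonneg a)), ← e]
        ring
      constructor
      · rw [hGdef]
        have h1 := integral_inv_subst (fun r => f (r • w) * r ^ (p - 1))
        rw [show (∫ a in Ioi (0:ℝ), f (a⁻¹ • w) * a ^ (-(p+1)))
            = ∫ a in Ioi (0:ℝ), |(-(a^2)⁻¹)| • (f ((a⁻¹) • w) * (a⁻¹) ^ (p - 1)) from
          (setIntegral_congr_fun measurableSet_Ioi (fun a ha => (hpt a ha).symm))]
        exact h1.symm
      · have h2 := integrable_inv_subst (fun r => f (r • w) * r ^ (p - 1))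
        have h3 := (h2.1 (hfin w hw))
        exact h3.congr_fun hpt measurableSet_Ioi
    set U : ℝ → ℝ := fun a => f (a⁻¹ • x) * a ^ (-(p+1)) with hUdef
    set V : ℝ → ℝ := fun b => f (b⁻¹ • y) * b ^ (-(p+1)) with hVdef
    set W : ℝ → ℝ := fun c => f (c⁻¹ • (x + y)) * c ^ (-(p+1)) with hWdef
    have hU0 : ∀ a ∈ Ioi (0:ℝ), 0 ≤ U a := fun a ha =>
      mul_nonneg (hf0 _) (Real.rpow_nonneg (le_of_lt ha) _)
    have hV0 : ∀ b ∈ Ioi (0:ℝ), 0 ≤ V b := fun b hb =>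
      mul_nonneg (hf0 _) (Real.rpow_nonneg (le_of_lt hb) _)
    have hW0 : ∀ c ∈ Ioi (0:ℝ), 0 ≤ W c := fun c hc =>
      mul_nonneg (hf0 _) (Real.rpow_nonneg (le_of_lt hc) _)
    have hIU := (key x hx).1
    have hIV := (key y hy).1
    have hIW := (key (x+y) hz).1
    have hA : 0 < ∫ a in Ioi (0:ℝ), U a := by rw [hIU]; exact hposint x hx
    have hB : 0 < ∫ b in Ioi (0:ℝ), V b := by rw [hIV]; exact hposint y hy
    have hcon : ∀ a ∈ Ioi (0:ℝ), ∀ b ∈ Ioi (0:ℝ), 0 < U a → 0 < V b →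
        (U a ^ (-(p+1)⁻¹) + V b ^ (-(p+1)⁻¹)) ^ (-(p+1)) ≤ W (a + b) := by
      intro a ha b hb hUa hVb
      have ha' : (0:ℝ) < a := ha
      have hb' : (0:ℝ) < b := hb
      have hab : (0:ℝ) < a + b := by linarith
      have hfa : 0 < f (a⁻¹ • x) := by
        rcases (hf0 (a⁻¹ • x)).lt_or_eq with h | h
        · exact h
        · exfalso
          rw [hUdef] at hUa
          simp only [← h, zero_mul] at hUa
          exact lt_irrefl 0 hUa
      have hfb : 0 < f (b⁻¹ • y) := by
        rcases (hf0 (b⁻¹ • y)).lt_or_eq with h | h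
        · exact h
        · exfalso
          rw [hVdef] at hVb
          simp only [← h, zero_mul] at hVb
          exact lt_irrefl 0 hVb
      have hXmem : a⁻¹ • x ∈ {x | 0 < f x} := hfa
      have hYmem : b⁻¹ • y ∈ {x | 0 < f x} := hfb
      set θ : ℝ := a / (a + b) with hθdef
      have hθ0 : 0 ≤ θ := div_nonneg ha'.le hab.le
      have hθ1 : θ ≤ 1 := by rw [hθdef, div_le_one hab]; linarith
      have hθ1' : 0 ≤ 1 - θ := by linarith
      have hθsum : θ + (1 - θ) = 1 := by ring
      have hcomb : θ • (a⁻¹ • x) + (1-θ) • (b⁻¹ • y) = (a+b)⁻¹ • (x + y) := by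
        rw [smul_smul, smul_smul, smul_add]
        have e1 : θ * a⁻¹ = (a+b)⁻¹ := by
          rw [hθdef]; field_simp
        have e2 : (1-θ) * b⁻¹ = (a+b)⁻¹ := by
          have h12 : 1 - θ = b / (a+b) := by rw [hθdef]; field_simp; ring
          rw [h12]; field_simp
        rw [e1, e2]
      have hconv : Convex ℝ {x | 0 < f x} := by
        rcases lt_trichotomy γ 0 with h | h | h
        · exact (hγneg h).1
        · exact (hγzero h).1
        · exact (hγpos h).1
      have hfc : 0 < f ((a+b)⁻¹ • (x+y)) := by
        have := hconv hXmem hYmem hθ0 hθ1' hθsum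
        rw [hcomb] at this; exact this
      have hms : f ((a+b)⁻¹ • (x+y)) ^ (-(p+1)⁻¹)
          ≤ θ * f (a⁻¹ • x) ^ (-(p+1)⁻¹) + (1-θ) * f (b⁻¹ • y) ^ (-(p+1)⁻¹) := by
        refine mean_step p γ hp hγ θ _ _ _ hθ0 hθ1 hfa hfb hfc ?_ ?_ ?_
        · intro hγ'
          have h2 := (hγneg hγ').2 hXmem hYmem hθ0 hθ1' hθsum
          rw [hcomb] at h2
          simpa [smul_eq_mul] using h2
        · intro hγ'
          have h2 := (hγzero hγ').2 hXmem hYmem hθ0 hθ1' hθsum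
          rw [hcomb] at h2
          simpa [smul_eq_mul] using h2
        · intro hγ'
          have h2 := (hγpos hγ').2 hXmem hYmem hθ0 hθ1' hθsum
          rw [hcomb] at h2
          simpa [smul_eq_mul] using h2
      have hq1 : (-(p+1)) * (-(p+1)⁻¹) = 1 := by field_simp
      have hUa' : U a ^ (-(p+1)⁻¹) = a * f (a⁻¹ • x) ^ (-(p+1)⁻¹) := by
        rw [hUdef]
        rw [Real.mul_rpow (hfa.le) (Real.rpow_nonneg ha'.le _),
          ← Real.rpow_mul ha'.le, hq1, Real.rpow_one, mul_comm]
      have hVb' : V b ^ (-(p+1)⁻¹) = b * f (b⁻¹ • y) ^ (-(p+1)⁻¹) := by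
        rw [hVdef]
        rw [Real.mul_rpow (hfb.le) (Real.rpow_nonneg hb'.le _),
          ← Real.rpow_mul hb'.le, hq1, Real.rpow_one, mul_comm]
      have hsum : (a+b) * f ((a+b)⁻¹ • (x+y)) ^ (-(p+1)⁻¹)
          ≤ U a ^ (-(p+1)⁻¹) + V b ^ (-(p+1)⁻¹) := by
        rw [hUa', hVb']
        have := mul_le_mul_of_nonneg_left hms hab.le
        calc (a+b) * f ((a+b)⁻¹ • (x+y)) ^ (-(p+1)⁻¹)
            ≤ (a+b) * (θ * f (a⁻¹ • x) ^ (-(p+1)⁻¹) + (1-θ) * f (b⁻¹ • y) ^ (-(p+1)⁻¹)) := this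
          _ = a * f (a⁻¹ • x) ^ (-(p+1)⁻¹) + b * f (b⁻¹ • y) ^ (-(p+1)⁻¹) := by
              rw [hθdef]; field_simp; ring
      have hpos1 : 0 < (a+b) * f ((a+b)⁻¹ • (x+y)) ^ (-(p+1)⁻¹) :=
        mul_pos hab (Real.rpow_pos_of_pos hfc _)
      have h5 := Real.rpow_le_rpow_of_nonpos hpos1 hsum (by linarith : -(p+1) ≤ 0)
      refine le_trans h5 ?_
      rw [Real.mul_rpow hab.le (Real.rpow_nonneg hfc.le _),
        ← Real.rpow_mul hfc.le]
      have : (-(p+1)⁻¹) * (-(p+1)) = 1 := by field_simp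
      rw [this, Real.rpow_one, hWdef]
      rw [mul_comm]
    have hcore := core_1d p hp U V W hU0 hV0 hW0 (key x hx).2 (key y hy).2
      (key (x+y) hz).2 hA hB hcon
    rw [hIU, hIV, hIW] at hcore
    have hD : 0 < G x ^ (-1/p) + G y ^ (-1/p) :=
      add_pos (Real.rpow_pos_of_pos (hposint x hx) _)
        (Real.rpow_pos_of_pos (hposint y hy) _)
    have h6 : G (x+y) ^ (-1/p) ≤ ((G x ^ (-1/p) + G y ^ (-1/p)) ^ (-p)) ^ (-1/p) :=
      Real.rpow_le_rpow_of_nonpos (Real.rpow_pos_of_pos hD _) hcore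
        (by apply div_nonpos_of_nonpos_of_nonneg <;> [norm_num; exact hp.le])
    have h7 : ((G x ^ (-1/p) + G y ^ (-1/p)) ^ (-p)) ^ (-1/p)
        = G x ^ (-1/p) + G y ^ (-1/p) := by
      rw [← Real.rpow_mul hD.le]
      have : (-p) * (-1/p) = 1 := by field_simp
      rw [this, Real.rpow_one]
    rw [hFx, hFx, hFx]
    rw [h7] at h6
    exact h6
  refine ⟨⟨convex_univ, ?_⟩, hhom⟩
  intro x _ y _ a b ha hb hab
  simp only [smul_eq_mul]
  rcases eq_or_lt_of_le ha with rfl | ha'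
  · have hb1 : b = 1 := by linarith
    subst hb1
    rw [zero_smul, zero_add, one_smul]
    simp
  rcases eq_or_lt_of_le hb with rfl | hb'
  · have ha1 : a = 1 := by linarith
    subst ha1
    rw [zero_smul, add_zero, one_smul]
    simp
  rcases eq_or_ne x 0 with rfl | hx
  · rw [smul_zero, zero_add, hhom b hb' y, hF0, mul_zero, zero_add]
  rcases eq_or_ne y 0 with rfl | hy
  · rw [smul_zero, add_zero, hhom a ha' x, hF0, mul_zero, add_zero]
  rcases eq_or_ne (a • x + b • y) 0 with h0 | hne
  · rw [h0, hF0]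
    exact add_nonneg (mul_nonneg ha (hFnn x)) (mul_nonneg hb (hFnn y))
  · have h1 := hsub (a • x) (b • y) (smul_ne_zero ha'.ne' hx) (smul_ne_zero hb'.ne' hy) hne
    rw [hhom a ha' x, hhom b hb' y] at h1
    exact h1
end

section
/- If K is a convex body in ℝⁿ containing 0 in its interior, C ⊂ ℝ^{n+1} a closed convex set, θ ∈ Sⁿ⁻¹ ⊂ ℝⁿ, and P_t : ℝ^{n+1} → ℝⁿ the projection P_t(x + s e_{n+1}) = x + tsθ, then with K_t = P_t(C), one has K_t° = P(C° ∩ (e_{n+1} - tθ)^⊥), where P is the orthogonal projection onto ℝⁿ = e_{n+1}^⊥ and C° is the polar of C in ℝ^{n+1}. -/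
/-- The polar of a shadow system: `K_t° = P(C° ∩ (e_{n+1} - tθ)^⊥)`. -/
theorem polar_shadow_eq_projection (n : ℕ)
    (C : Set (EuclideanSpace ℝ (Fin n) × ℝ))
    (hCclosed : IsClosed C) (hCconv : Convex ℝ C)
    (θ : EuclideanSpace ℝ (Fin n)) (hθ : ‖θ‖ = 1) (t : ℝ) :
    {x : EuclideanSpace ℝ (Fin n) |
        ∀ y ∈ (fun q : EuclideanSpace ℝ (Fin n) × ℝ => q.1 + (t * q.2) • θ) '' C,
          (inner ℝ x y : ℝ) ≤ 1} =
      Prod.fst ''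
        ({u : EuclideanSpace ℝ (Fin n) × ℝ |
            ∀ v ∈ C, (inner ℝ u.1 v.1 : ℝ) + u.2 * v.2 ≤ 1} ∩
          {u : EuclideanSpace ℝ (Fin n) × ℝ | (inner ℝ u.1 (-(t • θ)) : ℝ) + u.2 = 0}) := by
  ext x
  simp only [Set.mem_setOf_eq, Set.mem_image, Set.mem_inter_iff]
  constructor
  · intro h
    refine ⟨(x, t * inner ℝ x θ), ⟨fun v hv => ?_, ?_⟩, rfl⟩
    · have := h _ ⟨v, hv, rfl⟩
      rw [inner_add_right, real_inner_smul_right] at this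
      simp only; ring_nf at this ⊢; linarith
    · simp only [inner_neg_right, real_inner_smul_right]
      ring
  · rintro ⟨⟨u1, u2⟩, ⟨h1, h2⟩, rfl⟩ y ⟨v, hv, rfl⟩
    simp only [inner_neg_right, real_inner_smul_right] at h2
    have := h1 v hv
    rw [inner_add_right, real_inner_smul_right]
    simp only at this h2 ⊢
    have hu2 : u2 = t * inner ℝ u1 θ := by linarith
    rw [hu2] at this
    ring_nf at this ⊢
    linarith
end

section
/- Let f : [0, ∞) → ℝ be decreasing and g : [0, ∞) → [0, 1] measurable such that ∫₀^∞ g(r) r^{n-1} dr = ∫₀^{r₀} r^{n-1} dr for some r₀ > 0. Then ∫₀^∞ f(r) g(r) r^{n-1} dr ≤ ∫₀^{r₀} f(r) r^{n-1} dr. -/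
open MeasureTheory

/-- One-dimensional rearrangement-type inequality for decreasing `f`. -/
theorem decreasing_versus_indicator (n : ℕ) (f g : ℝ → ℝ) (r₀ : ℝ) (hr₀ : 0 < r₀)
    (hf0 : ∀ r, 0 ≤ f r) (hfdec : AntitoneOn f (Set.Ici 0))
    (hg : ∀ r, g r ∈ Set.Icc (0 : ℝ) 1)
    (hmass : ∫ r in Set.Ioi (0 : ℝ), g r * r ^ ((n : ℝ) - 1) =
      ∫ r in Set.Ioc (0 : ℝ) r₀, r ^ ((n : ℝ) - 1))
    (hint1 : IntegrableOn (fun r : ℝ => f r * g r * r ^ ((n : ℝ) - 1)) (Set.Ioi 0))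
    (hint2 : IntegrableOn (fun r : ℝ => f r * r ^ ((n : ℝ) - 1)) (Set.Ioc 0 r₀))
    (hint3 : IntegrableOn (fun r : ℝ => g r * r ^ ((n : ℝ) - 1)) (Set.Ioi 0)) :
    ∫ r in Set.Ioi (0 : ℝ), f r * g r * r ^ ((n : ℝ) - 1) ≤
      ∫ r in Set.Ioc (0 : ℝ) r₀, f r * r ^ ((n : ℝ) - 1) := by
  set e : ℝ := (n : ℝ) - 1 with he
  set I : Set ℝ := Set.Ioc (0 : ℝ) r₀ with hIdef
  have hIsub : I ⊆ Set.Ioi (0 : ℝ) := fun x hx => hx.1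
  have hImeas : MeasurableSet I := measurableSet_Ioc
  have hwpos : ∀ r : ℝ, r ∈ Set.Ioi (0:ℝ) → 0 ≤ r ^ e := fun r hr =>
    Real.rpow_nonneg (le_of_lt hr) e
  by_cases hw : IntegrableOn (fun r : ℝ => r ^ e) I
  · -- main case
    set c : ℝ := f r₀ with hc
    have hcg : IntegrableOn (fun r : ℝ => c * (g r * r ^ e)) (Set.Ioi 0) :=
      hint3.const_mul c
    have hindf : IntegrableOn (fun r : ℝ => I.indicator (fun s => f s * s ^ e) r)
        (Set.Ioi 0) :=
      (hint2.integrable_indicator hImeas).integrableOn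
    have hindw : IntegrableOn (fun r : ℝ => c * I.indicator (fun s => s ^ e) r)
        (Set.Ioi 0) :=
      ((hw.integrable_indicator hImeas).integrableOn).const_mul c
    set H : ℝ → ℝ := fun r => f r * g r * r ^ e - c * (g r * r ^ e)
        - I.indicator (fun s => f s * s ^ e) r + c * I.indicator (fun s => s ^ e) r
      with hHdef
    have h1 : IntegrableOn (fun r : ℝ => f r * g r * r ^ e - c * (g r * r ^ e))
        (Set.Ioi 0) := hint1.sub hcg
    have h2 : IntegrableOn (fun r : ℝ => f r * g r * r ^ e - c * (g r * r ^ e)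
        - I.indicator (fun s => f s * s ^ e) r) (Set.Ioi 0) := h1.sub hindf
    have hHint : IntegrableOn H (Set.Ioi 0) := h2.add hindw
    have hHle : ∀ r ∈ Set.Ioi (0:ℝ), H r ≤ 0 := by
      intro r hr
      have hwp : 0 ≤ r ^ e := hwpos r hr
      by_cases hrI : r ∈ I
      · have hfc : c ≤ f r := hfdec (le_of_lt hrI.1) (le_of_lt hr₀) hrI.2
        have hg1 : g r ≤ 1 := (hg r).2
        simp only [hHdef, Set.indicator_of_mem hrI]
        nlinarith [mul_nonneg (mul_nonneg (sub_nonneg.2 hfc) (sub_nonneg.2 hg1)) hwp]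
      · have hrr₀ : r₀ < r := by
          by_contra h
          exact hrI ⟨hr, not_lt.1 h⟩
        have hcf : f r ≤ c := hfdec (le_of_lt hr₀) (le_of_lt (Set.mem_Ioi.mp hr)) (le_of_lt hrr₀)
        have hg0 : 0 ≤ g r := (hg r).1
        simp only [hHdef, Set.indicator_of_notMem hrI]
        nlinarith [mul_nonneg (mul_nonneg (sub_nonneg.2 hcf) hg0) hwp]
    have hHint0 : ∫ r in Set.Ioi (0:ℝ), H r ≤ 0 := by
      have : ∫ r in Set.Ioi (0:ℝ), H r ≤ ∫ _ in Set.Ioi (0:ℝ), (0:ℝ) :=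
        setIntegral_mono_on hHint (integrable_zero _ _ _) measurableSet_Ioi hHle
      simpa using this
    have hsplit : ∫ r in Set.Ioi (0:ℝ), H r =
        (∫ r in Set.Ioi (0:ℝ), f r * g r * r ^ e)
        - c * (∫ r in Set.Ioi (0:ℝ), g r * r ^ e)
        - (∫ r in I, f r * r ^ e) + c * (∫ r in I, r ^ e) := by
      rw [hHdef]
      rw [integral_add h2 hindw,
        integral_sub h1 hindf, integral_sub hint1 hcg,
        integral_const_mul, integral_const_mul,
        setIntegral_indicator hImeas, setIntegral_indicator hImeas,
        Set.inter_eq_right.2 hIsub]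
    rw [hsplit, hmass] at hHint0
    linarith
  · -- degenerate case: r^e not integrable on I, so both integrals behave trivially
    have h0 : ∫ r in I, r ^ e = 0 := integral_undef hw
    have hmass0 : ∫ r in Set.Ioi (0:ℝ), g r * r ^ e = 0 := by rw [hmass, h0]
    have hgw0 : (fun r => g r * r ^ e) =ᵐ[volume.restrict (Set.Ioi (0:ℝ))] 0 := by
      have hnn : 0 ≤ᵐ[volume.restrict (Set.Ioi (0:ℝ))] fun r => g r * r ^ e := by
        filter_upwards [ae_restrict_mem measurableSet_Ioi] with r hr
        exact mul_nonneg (hg r).1 (hwpos r hr)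
      exact (integral_eq_zero_iff_of_nonneg_ae hnn hint3).1 hmass0
    have hfgw0 : (fun r => f r * g r * r ^ e) =ᵐ[volume.restrict (Set.Ioi (0:ℝ))] 0 := by
      filter_upwards [hgw0] with r hr
      simp only [Pi.zero_apply] at hr ⊢
      rw [mul_assoc, hr, mul_zero]
    rw [integral_congr_ae hfgw0]
    simp only [Pi.zero_apply, integral_zero]
    exact setIntegral_nonneg hImeas fun r hr =>
      mul_nonneg (hf0 r) (hwpos r (hIsub hr))
end
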